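/- Let α > 1 and consider robust pruning at a vertex p over candidate set V with parameter α and no degree limit, and let U be its output. Then for any two distinct points u, w ∈ U with D(p,u) ≤ D(p,w), it holds that α·D(u,w) ≥ D(p,w). (The output of robust pruning is an 'α-separated' set with respect to p: no output point could have pruned another.) -/

import Mathlib

/-- Robust pruning at `p` with parameter `α`: the input list is the candidate set sorted by
increasing distance to `p`; the closest unpruned point `u` is selected, and every remaining
point `w` with `α * dist u w < dist p w` is deleted. -/
noncomputable def robustPrune {X : Type*} [MetricSpace X] (α : ℝ) (p : X) : List X → List X
  | [] => []
  | u :: rest =>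
      u :: robustPrune α p (rest.filter fun w => decide (dist p w ≤ α * dist u w))
termination_by l => l.length
decreasing_by
  simpa using Nat.lt_succ_of_le ((List.length_filter_le _ rest.attach).trans_eq List.length_attach)

lemma robustPrune_subset {X : Type*} [MetricSpace X] (α : ℝ) (p : X) :
    ∀ L : List X, ∀ x ∈ robustPrune α p L, x ∈ L := by
  intro L
  induction L using robustPrune.induct α p with
  | case1 => simp [robustPrune]
  | case2 u rest ih =>
    rw [List.unattach_filter (g := fun w => decide (dist p w ≤ α * dist u w)) (hf := fun _ _ => rfl), List.unattach_attach] at ih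
    intro x hx
    rw [robustPrune] at hx
    rcases List.mem_cons.1 hx with h | h
    · simp [h]
    · exact List.mem_cons_of_mem _ (List.mem_of_mem_filter (ih x h))

lemma robustPrune_sep {X : Type*} [MetricSpace X] (α : ℝ) (p : X) :
    ∀ L : List X, (L.Pairwise fun a b => dist p a ≤ dist p b) →
    ∀ u ∈ robustPrune α p L, ∀ w ∈ robustPrune α p L, u ≠ w →
      dist p u ≤ dist p w → dist p w ≤ α * dist u w := by
  intro L
  induction L using robustPrune.induct α p with
  | case1 => simp [robustPrune]
  | case2 a rest ih =>
    rw [List.unattach_filter (g := fun w => decide (dist p w ≤ α * dist a w)) (hf := fun _ _ => rfl), List.unattach_attach] at ih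
    intro hsort u hu w hw hne hle
    rw [robustPrune] at hu hw
    rw [List.pairwise_cons] at hsort
    rcases List.mem_cons.1 hu with hu | hu <;> rcases List.mem_cons.1 hw with hw | hw
    · exact absurd (hu.trans hw.symm) hne
    · -- u = a, w in recursive output
      subst hu
      have hwL := robustPrune_subset α p _ w hw
      have := (List.mem_filter.1 hwL).2
      simpa using this
    · -- w = a, u in recursive output
      subst hw
      have huL := robustPrune_subset α p _ u hu
      have h1 : dist p u ≤ α * dist w u := by
        have := (List.mem_filter.1 huL).2
        simpa using this
      calc dist p w ≤ dist p u := hsort.1 u (List.mem_of_mem_filter huL)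
        _ ≤ α * dist w u := h1
        _ = α * dist u w := by rw [dist_comm]
    · exact ih ((hsort.2).sublist List.filter_sublist) u hu w hw hne hle

/-- The output of robust pruning is `α`-separated with respect to `p`:
for distinct output points `u, w` with `dist p u ≤ dist p w`, `α * dist u w ≥ dist p w`. -/
theorem robustPrune_separated {X : Type*} [MetricSpace X]
    (α : ℝ) (hα : 1 < α) (V : Finset X) (p : X) (hp : p ∈ V)
    (L : List X) (hL : ∀ q, q ∈ L ↔ q ∈ V ∧ q ≠ p) (hnodup : L.Nodup)
    (hsorted : L.Pairwise fun a b => dist p a ≤ dist p b) :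
    ∀ u ∈ robustPrune α p L, ∀ w ∈ robustPrune α p L, u ≠ w →
      dist p u ≤ dist p w → dist p w ≤ α * dist u w :=
  robustPrune_sep α p L hsorted
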